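/- arXiv:2305.06527 — 3 statements merged into one kernel-verified Lean document; each statement's English description precedes it below -/
import Mathlib

section
/- Non-stationary phase bound for the Klein–Gordon phase: for every θ ∈ {+1,−1}, every t > 0, every x ∈ ℝ² with |x| ≥ t, and every ξ ∈ ℝ², the gradient ∇φ_θ(ξ) = −θ ξ/⟨ξ⟩ + x/t of the phase φ_θ(ξ) = −θ⟨ξ⟩ + ξ·(x/t) satisfies |x/t − θ ξ/⟨ξ⟩| ≥ 1/(2⟨ξ⟩²). -/
/-!
Since `⟨ξ⟩² = 1 + |ξ|²`, one has `2⟨ξ⟩(⟨ξ⟩ - |ξ|) = 1 + (⟨ξ⟩ - |ξ|)² ≥ 1`, that is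
`1 - |ξ|/⟨ξ⟩ ≥ 1/(2⟨ξ⟩²)`. The gradient is then bounded below by the reverse triangle
inequality, since `|x/t| ≥ 1` while `|θξ/⟨ξ⟩| = |ξ|/⟨ξ⟩`.
-/

noncomputable section

/-- Japanese bracket `⟨ξ⟩ = (1+|ξ|²)^{1/2}` on `ℝ²`. -/
def jb (ξ : EuclideanSpace ℝ (Fin 2)) : ℝ := Real.sqrt (1 + ‖ξ‖ ^ 2)

lemma one_div_two_mul_sq_le_one_sub_div {r s : ℝ} (hs : 0 < s)
    (hsr : s ^ 2 = 1 + r ^ 2) : 1 / (2 * s ^ 2) ≤ 1 - r / s := by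
  have key : 2 * s * (s - r) = 1 + (s - r) ^ 2 := by linear_combination hsr
  rw [one_sub_div hs.ne', div_le_div_iff₀ (by positivity) hs]
  nlinarith [mul_nonneg hs.le (sq_nonneg (s - r))]

lemma jb_pos (ξ : EuclideanSpace ℝ (Fin 2)) : 0 < jb ξ :=
  Real.sqrt_pos.mpr (by positivity)

lemma jb_sq (ξ : EuclideanSpace ℝ (Fin 2)) : jb ξ ^ 2 = 1 + ‖ξ‖ ^ 2 :=
  Real.sq_sqrt (by positivity)

lemma one_div_two_mul_jb_sq_le (ξ : EuclideanSpace ℝ (Fin 2)) :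
    1 / (2 * jb ξ ^ 2) ≤ 1 - ‖ξ‖ / jb ξ :=
  one_div_two_mul_sq_le_one_sub_div (jb_pos ξ) (jb_sq ξ)

lemma one_le_norm_inv_smul {E : Type*} [NormedAddCommGroup E] [NormedSpace ℝ E] {t : ℝ}
    {x : E} (ht : 0 < t) (hx : t ≤ ‖x‖) : 1 ≤ ‖t⁻¹ • x‖ := by
  rw [norm_smul, norm_inv, Real.norm_of_nonneg ht.le, ← div_eq_inv_mul, one_le_div ht]
  exact hx

/-- Non-stationary phase bound: for `|x| ≥ t > 0`,
`|∇φ_θ(ξ)| = |x/t − θξ/⟨ξ⟩| ≥ 1/(2⟨ξ⟩²)`. -/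
theorem nonstationary_phase_bound (θ : ℝ) (hθ : θ = 1 ∨ θ = -1)
    (t : ℝ) (ht : 0 < t) (x : EuclideanSpace ℝ (Fin 2)) (hx : t ≤ ‖x‖)
    (ξ : EuclideanSpace ℝ (Fin 2)) :
    ‖t⁻¹ • x - (θ / jb ξ) • ξ‖ ≥ 1 / (2 * (jb ξ) ^ 2) := by
  have hθ_abs : |θ| = 1 := by rcases hθ with rfl | rfl <;> simp
  have hθξ : ‖(θ / jb ξ) • ξ‖ = ‖ξ‖ / jb ξ := by
    rw [norm_smul, Real.norm_eq_abs, abs_div, hθ_abs, abs_of_pos (jb_pos ξ), one_div_mul_eq_div]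
  calc 1 / (2 * jb ξ ^ 2) ≤ 1 - ‖ξ‖ / jb ξ := one_div_two_mul_jb_sq_le ξ
    _ ≤ ‖t⁻¹ • x‖ - ‖(θ / jb ξ) • ξ‖ := by
      rw [hθξ]
      linarith [one_le_norm_inv_smul ht hx]
    _ ≤ ‖t⁻¹ • x - (θ / jb ξ) • ξ‖ := norm_sub_norm_le _ _
end
end

section
/- Space-resonance lower bound: for all ξ, η ∈ ℝ², the difference of relativistic velocities satisfies |ξ/⟨ξ⟩ − η/⟨η⟩| ≥ |ξ − η| / (max(⟨ξ⟩, ⟨η⟩))³. In particular, with η replaced by ξ+η, the gradient |∇_η φ_θ(ξ,η)| = |η/⟨η⟩ − (ξ+η)/⟨ξ+η⟩| of the bilinear phase φ_θ(ξ,η) = θ(⟨η⟩ − ⟨ξ+η⟩) is bounded below by |ξ| / (max(⟨η⟩, ⟨ξ+η⟩))³. -/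
noncomputable section

/-!
Let `a = ⟨x⟩ ≥ b = ⟨y⟩`. Both `‖x - y‖²` and `a⁶ ‖x / a - y / b‖²` are affine in `⟪x, y⟫`, and
the second one decreases faster because `a⁵ ≥ b`; as `⟪x, y⟫ ≤ ‖x‖ ‖y‖`, it suffices to treat
collinear vectors, i.e. the scalar inequality `p - q ≤ ⟨p⟩³ (p / ⟨p⟩ - q / ⟨q⟩)` for `0 ≤ q ≤ p`.
That one follows from `p / ⟨p⟩ - q / ⟨q⟩ = (p² - q²) / (⟨p⟩ ⟨q⟩ (p ⟨q⟩ + q ⟨p⟩))` together with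
`⟨q⟩ (p ⟨q⟩ + q ⟨p⟩) ≤ ⟨p⟩² (p + q)`.
-/

section

variable {E : Type*} [SeminormedAddCommGroup E]

def japaneseBracket (x : E) : ℝ := √(1 + ‖x‖ ^ 2)

theorem sq_japaneseBracket (x : E) : japaneseBracket x ^ 2 = 1 + ‖x‖ ^ 2 :=
  Real.sq_sqrt (by positivity)

theorem one_le_japaneseBracket (x : E) : 1 ≤ japaneseBracket x :=
  Real.one_le_sqrt.mpr (le_add_of_nonneg_right (by positivity))

theorem japaneseBracket_pos (x : E) : 0 < japaneseBracket x :=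
  zero_lt_one.trans_le (one_le_japaneseBracket x)

theorem japaneseBracket_le_japaneseBracket_iff {x y : E} :
    japaneseBracket y ≤ japaneseBracket x ↔ ‖y‖ ≤ ‖x‖ := by
  rw [japaneseBracket, japaneseBracket, Real.sqrt_le_sqrt_iff (by positivity), add_le_add_iff_left,
    sq_le_sq₀ (norm_nonneg y) (norm_nonneg x)]

theorem japaneseBracket_norm (x : E) : japaneseBracket ‖x‖ = japaneseBracket x := by
  simp only [japaneseBracket, norm_norm]

end

theorem sub_le_japaneseBracket_pow_three_mul {p q : ℝ} (hq : 0 ≤ q) (hqp : q ≤ p) :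
    p - q ≤ japaneseBracket p ^ 3 * ((japaneseBracket p)⁻¹ * p - (japaneseBracket q)⁻¹ * q) := by
  obtain rfl | hlt := hqp.eq_or_lt
  · simp
  set a := japaneseBracket p
  set b := japaneseBracket q
  have ha : a ^ 2 = 1 + p ^ 2 := by rw [sq_japaneseBracket, Real.norm_eq_abs, sq_abs]
  have hb : b ^ 2 = 1 + q ^ 2 := by rw [sq_japaneseBracket, Real.norm_eq_abs, sq_abs]
  have ha0 : 0 < a := japaneseBracket_pos p
  have hb0 : 0 < b := japaneseBracket_pos q
  have hba : b ≤ a := japaneseBracket_le_japaneseBracket_iff.mpr <| by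
    rwa [Real.norm_of_nonneg hq, Real.norm_of_nonneg (hq.trans hqp)]
  have hs : 0 < p * b + q * a := by
    nlinarith [mul_pos (hq.trans_lt hlt) hb0, mul_nonneg hq ha0.le]
  have hcube : a ^ 3 * (a⁻¹ * p - b⁻¹ * q) = a ^ 2 * (p * b - q * a) / b := by
    field_simp
  have key : (p * b - q * a) * (p * b + q * a) = p ^ 2 - q ^ 2 := by
    linear_combination p ^ 2 * hb - q ^ 2 * ha
  have hgap : b * (p * b + q * a) ≤ a ^ 2 * (p + q) := by
    nlinarith [mul_le_mul_of_nonneg_left (pow_le_pow_left₀ hb0.le hba 2) (hq.trans hqp),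
      mul_le_mul_of_nonneg_left hba (mul_nonneg hq ha0.le)]
  rw [hcube, le_div_iff₀ hb0, ← mul_le_mul_iff_of_pos_right hs, mul_assoc (a ^ 2), key]
  nlinarith [mul_le_mul_of_nonneg_left hgap (sub_nonneg.mpr hqp)]

section

variable {E : Type*} [NormedAddCommGroup E] [InnerProductSpace ℝ E]

theorem norm_sub_le_japaneseBracket_pow_three_mul {x y : E}
    (h : japaneseBracket y ≤ japaneseBracket x) :
    ‖x - y‖ ≤ japaneseBracket x ^ 3 * ‖(japaneseBracket x)⁻¹ • x - (japaneseBracket y)⁻¹ • y‖ := by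
  have hnorm : ‖y‖ ≤ ‖x‖ := japaneseBracket_le_japaneseBracket_iff.mp h
  have hcol := sub_le_japaneseBracket_pow_three_mul (norm_nonneg y) hnorm
  rw [japaneseBracket_norm, japaneseBracket_norm] at hcol
  set a := japaneseBracket x
  set b := japaneseBracket y
  set p := ‖x‖
  set q := ‖y‖
  set t := inner ℝ x y
  have ha0 : 0 < a := japaneseBracket_pos x
  have hb0 : 0 < b := japaneseBracket_pos y
  have hcol_sq : (p - q) ^ 2 ≤ a ^ 6 * (a⁻¹ * p - b⁻¹ * q) ^ 2 := by
    have := pow_le_pow_left₀ (sub_nonneg.mpr hnorm) hcol 2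
    linear_combination this
  have hinner : 0 ≤ p * q - t := sub_nonneg.mpr (real_inner_le_norm x y)
  have hgain : 1 ≤ a ^ 5 / b := by
    rw [one_le_div hb0]
    calc b ≤ a := h
      _ ≤ a ^ 5 := le_self_pow₀ (one_le_japaneseBracket x) (by norm_num)
  have hN : ‖a⁻¹ • x - b⁻¹ • y‖ ^ 2 = (a⁻¹ * p - b⁻¹ * q) ^ 2 + 2 * a⁻¹ * b⁻¹ * (p * q - t) := by
    rw [norm_sub_sq_real, norm_smul, norm_smul, real_inner_smul_left, real_inner_smul_right,
      Real.norm_of_nonneg (inv_nonneg.mpr ha0.le), Real.norm_of_nonneg (inv_nonneg.mpr hb0.le)]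
    ring
  refine le_of_pow_le_pow_left₀ two_ne_zero (by positivity) ?_
  calc ‖x - y‖ ^ 2 = (p - q) ^ 2 + 2 * (p * q - t) := by rw [norm_sub_sq_real]; ring
    _ ≤ a ^ 6 * (a⁻¹ * p - b⁻¹ * q) ^ 2 + a ^ 5 / b * (2 * (p * q - t)) :=
      add_le_add hcol_sq (le_mul_of_one_le_left (mul_nonneg zero_le_two hinner) hgain)
    _ = (a ^ 3 * ‖a⁻¹ • x - b⁻¹ • y‖) ^ 2 := by
      rw [mul_pow, hN]
      field_simp

theorem norm_sub_div_max_pow_three_le (x y : E) :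
    ‖x - y‖ / max (japaneseBracket x) (japaneseBracket y) ^ 3 ≤
      ‖(japaneseBracket x)⁻¹ • x - (japaneseBracket y)⁻¹ • y‖ := by
  rw [div_le_iff₀' (pow_pos (lt_max_of_lt_left (japaneseBracket_pos x)) 3)]
  rcases le_total (japaneseBracket y) (japaneseBracket x) with h | h
  · rw [max_eq_left h]
    exact norm_sub_le_japaneseBracket_pow_three_mul h
  · rw [max_eq_right h, norm_sub_rev, norm_sub_rev ((japaneseBracket x)⁻¹ • x)]
    exact norm_sub_le_japaneseBracket_pow_three_mul h

end

/-- Space-resonance lower bound for the relativistic velocity difference. -/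
theorem space_resonance_lower_bound :
    (∀ ξ η : EuclideanSpace ℝ (Fin 2),
      ‖(jb ξ)⁻¹ • ξ - (jb η)⁻¹ • η‖ ≥ ‖ξ - η‖ / (max (jb ξ) (jb η)) ^ 3) ∧
    (∀ ξ η : EuclideanSpace ℝ (Fin 2),
      ‖(jb η)⁻¹ • η - (jb (ξ + η))⁻¹ • (ξ + η)‖ ≥
        ‖ξ‖ / (max (jb η) (jb (ξ + η))) ^ 3) := by
  refine ⟨fun ξ η => norm_sub_div_max_pow_three_le ξ η, fun ξ η => ?_⟩
  have h := norm_sub_div_max_pow_three_le η (ξ + η)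
  rwa [sub_add_cancel_right, norm_neg] at h
end
end

section
/- Coifman–Meyer type bilinear estimate (Lemma 2.4, bilinear case): let p, q ∈ [2,∞] with 1/p + 1/q = 1/2. There exists a constant C > 0 (depending only on p, q and the Fourier normalization) such that for every kernel K ∈ L¹(ℝ² × ℝ²; ℂ), with associated multiplier m(ξ,η) := ∬_{ℝ²×ℝ²} K(x,y) e^{i x·ξ} e^{i y·η} dx dy, and all Schwartz functions ψ, φ : ℝ² → ℂ, one has ‖ ξ ↦ ∫_{ℝ²} m(ξ,η) ψ̂(ξ−η) φ̂(η) dη ‖_{L²(ℝ²)} ≤ C ‖K‖_{L¹(ℝ⁴)} ‖ψ‖_{L^p(ℝ²)} ‖φ‖_{L^q(ℝ²)}, where ψ̂ denotes the Fourier transform of ψ. -/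
noncomputable section

open MeasureTheory
open scoped ENNReal RealInnerProductSpace

abbrev E2 : Type := EuclideanSpace ℝ (Fin 2)

/-- The multiplier associated with a kernel `K ∈ L¹(ℝ²×ℝ²)`:
`m(ξ,η) = ∬ K(x,y) e^{ix·ξ} e^{iy·η} dx dy`. -/
def multiplier2 (K : E2 × E2 → ℂ) (ξ η : E2) : ℂ :=
  ∫ p : E2 × E2, K p *
    Complex.exp (Complex.I * ((⟪p.1, ξ⟫ : ℝ) + (⟪p.2, η⟫ : ℝ)))

/-!
Expanding `m`, the bilinear expression is the superposition
`∫ K(x,y) e^{i x·ξ} H_y(ξ) d(x,y)` with `H_y(ξ) = ∫ e^{i y·η} ψ̂(ξ-η) φ̂(η) dη`, and `H_y` is the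
convolution of `ψ̂` with the Fourier transform of the translate `φ(· + y/2π)`. By Plancherel, and
since `𝓕 (𝓕 f) = f(-·)`, `‖H_y‖₂ = ‖ψ · φ(· + y/2π)‖₂ ≤ ‖ψ‖_p ‖φ‖_q` by Hölder, uniformly in `y`.
Minkowski's integral inequality in `L²` then gives the estimate with `C = 1`.
-/

open Function SchwartzMap FourierTransform Complex
open scoped Convolution

section Minkowski

variable {α β : Type*} [MeasurableSpace α] [MeasurableSpace β] {μ : Measure α} {ν : Measure β}

theorem lintegral_mul_le_eLpNorm_two_mul {f g : α → ℝ≥0∞} (hf : AEMeasurable f μ)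
    (hg : AEMeasurable g μ) : ∫⁻ x, f x * g x ∂μ ≤ eLpNorm f 2 μ * eLpNorm g 2 μ := by
  simpa [eLpNorm_eq_lintegral_rpow_enorm_toReal] using
    ENNReal.lintegral_mul_le_Lp_mul_Lq μ .two_two hf hg

theorem eLpNorm_two_sq_eq_lintegral {ε : Type*} [ENorm ε] (f : α → ε) :
    eLpNorm f 2 μ ^ 2 = ∫⁻ x, ‖f x‖ₑ ^ 2 ∂μ := by
  simpa using eLpNorm_nnreal_pow_eq_lintegral (f := f) (μ := μ) (p := 2) two_ne_zero

variable [SFinite μ] [SFinite ν]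

theorem eLpNorm_two_lintegral_le {f : β → α → ℝ≥0∞} (hf : Measurable (uncurry f)) :
    eLpNorm (fun x ↦ ∫⁻ y, f y x ∂ν) 2 μ ≤ ∫⁻ y, eLpNorm (f y) 2 μ ∂ν := by
  have hfx (x : α) : Measurable (f · x) := hf.comp (measurable_id.prodMk measurable_const)
  have hfy (y : β) : Measurable (f y) := hf.comp (measurable_const.prodMk measurable_id)
  have hN : Measurable fun y ↦ eLpNorm (f y) 2 μ := by
    simp only [eLpNorm_eq_lintegral_rpow_enorm_toReal two_ne_zero ENNReal.ofNat_ne_top]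
    exact ((hf.pow_const _).lintegral_prod_right').pow_const _
  rw [← ENNReal.pow_le_pow_left_iff two_ne_zero, eLpNorm_two_sq_eq_lintegral]
  calc ∫⁻ x, (∫⁻ y, f y x ∂ν) ^ 2 ∂μ
      = ∫⁻ x, ∫⁻ w : β × β, f w.1 x * f w.2 x ∂ν.prod ν ∂μ := by
        simp_rw [sq, lintegral_prod_mul (hfx _).aemeasurable (hfx _).aemeasurable]
    _ = ∫⁻ w : β × β, ∫⁻ x, f w.1 x * f w.2 x ∂μ ∂ν.prod ν := by
        refine lintegral_lintegral_swap (Measurable.aemeasurable ?_)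
        exact (hf.comp (measurable_snd.fst.prodMk measurable_fst)).mul
          (hf.comp (measurable_snd.snd.prodMk measurable_fst))
    _ ≤ ∫⁻ w : β × β, eLpNorm (f w.1) 2 μ * eLpNorm (f w.2) 2 μ ∂ν.prod ν :=
        lintegral_mono fun w ↦
          lintegral_mul_le_eLpNorm_two_mul (hfy _).aemeasurable (hfy _).aemeasurable
    _ = (∫⁻ y, eLpNorm (f y) 2 μ ∂ν) ^ 2 := by
        rw [lintegral_prod_mul hN.aemeasurable hN.aemeasurable, sq]

theorem eLpNorm_two_integral_le {E : Type*} [NormedAddCommGroup E] [NormedSpace ℝ E]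
    {F : β → α → E} (hF : AEStronglyMeasurable (uncurry F) (ν.prod μ)) :
    eLpNorm (fun x ↦ ∫ y, F y x ∂ν) 2 μ ≤ ∫⁻ y, eLpNorm (F y) 2 μ ∂ν := by
  set G := hF.mk
  have hFG : uncurry F =ᵐ[ν.prod μ] G := hF.ae_eq_mk
  have hx : ∀ᵐ x ∂μ, ∫ y, F y x ∂ν = ∫ y, G (y, x) ∂ν := by
    have := Measure.measurePreserving_swap.quasiMeasurePreserving.ae hFG
    filter_upwards [Measure.ae_ae_of_ae_prod this] with x hx using integral_congr_ae hx
  have hy : ∀ᵐ y ∂ν, eLpNorm (fun x ↦ G (y, x)) 2 μ = eLpNorm (F y) 2 μ := by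
    filter_upwards [Measure.ae_ae_of_ae_prod hFG] with y hy using (eLpNorm_congr_ae hy).symm
  calc eLpNorm (fun x ↦ ∫ y, F y x ∂ν) 2 μ = eLpNorm (fun x ↦ ∫ y, G (y, x) ∂ν) 2 μ :=
        eLpNorm_congr_ae hx
    _ ≤ eLpNorm (fun x ↦ ∫⁻ y, ‖G (y, x)‖ₑ ∂ν) 2 μ :=
        eLpNorm_mono_enorm fun x ↦ enorm_integral_le_lintegral_enorm _
    _ ≤ ∫⁻ y, eLpNorm (fun x ↦ ‖G (y, x)‖ₑ) 2 μ ∂ν :=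
        eLpNorm_two_lintegral_le hF.stronglyMeasurable_mk.enorm
    _ = ∫⁻ y, eLpNorm (F y) 2 μ ∂ν := by
        simp only [eLpNorm_enorm]
        exact lintegral_congr_ae hy

end Minkowski

section Fourier

variable {V : Type*} [NormedAddCommGroup V] [InnerProductSpace ℝ V] [FiniteDimensional ℝ V]
  [MeasurableSpace V] [BorelSpace V]

theorem Real.fourier_comp_add_right {E : Type*} [NormedAddCommGroup E] [NormedSpace ℂ E]
    (f : V → E) (c : V) : 𝓕 (fun x ↦ f (x + c)) = fun η ↦ Real.fourierChar ⟪c, η⟫ • 𝓕 f η :=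
  VectorFourier.fourierIntegral_comp_add_right _ _ _ f c

namespace SchwartzMap

variable {E : Type*} [NormedAddCommGroup E] [NormedSpace ℂ E] [CompleteSpace E]

theorem eLpNorm_fourier_two_eq (f : 𝓢(V, ℂ)) :
    eLpNorm ⇑(𝓕 f : 𝓢(V, ℂ)) 2 volume = eLpNorm f 2 volume := by
  have := norm_fourier_toL2_eq f
  rw [norm_toLp, norm_toLp] at this
  exact (ENNReal.toReal_eq_toReal_iff' (eLpNorm_lt_top _ _ _).ne (eLpNorm_lt_top _ _ _).ne).1 this

theorem fourier_fourier_apply (f : 𝓢(V, E)) (x : V) : 𝓕 (𝓕 f) x = f (-x) := by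
  conv_lhs => rw [← neg_neg x]
  rw [fourier_coe, ← Real.fourierInv_eq_fourier_neg, ← fourierInv_coe, fourierInv_fourier_eq]

theorem eLpNorm_fourier_fourier (f : 𝓢(V, E)) (p : ℝ≥0∞) :
    eLpNorm ⇑(𝓕 (𝓕 f) : 𝓢(V, E)) p volume = eLpNorm f p volume := by
  simp_rw [funext (fourier_fourier_apply f)]
  exact eLpNorm_comp_measurePreserving f.continuous.aestronglyMeasurable
    (Measure.measurePreserving_neg volume)

theorem eLpNorm_fourier_convolution_le {p q : ℝ≥0∞} [p.HolderTriple q 2] (f g : 𝓢(V, ℂ)) :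
    eLpNorm (⇑(𝓕 f : 𝓢(V, ℂ)) ⋆[ContinuousLinearMap.mul ℂ ℂ] ⇑(𝓕 g : 𝓢(V, ℂ))) 2 volume ≤
      eLpNorm f p volume * eLpNorm g q volume := by
  rw [← funext (convolution_apply _ (𝓕 f) (𝓕 g)), ← eLpNorm_fourier_two_eq, fourier_convolution,
    ← eLpNorm_fourier_fourier f, ← eLpNorm_fourier_fourier g]
  have hpair : ⇑(pairing (ContinuousLinearMap.mul ℂ ℂ) (𝓕 (𝓕 f)) (𝓕 (𝓕 g))) =
      fun x ↦ (𝓕 (𝓕 f) : 𝓢(V, ℂ)) x * (𝓕 (𝓕 g) : 𝓢(V, ℂ)) x :=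
    funext (pairing_apply_apply _ _ _)
  rw [hpair]
  simpa using eLpNorm_le_eLpNorm_mul_eLpNorm'_of_norm (r := 2)
    (𝓕 (𝓕 f) : 𝓢(V, ℂ)).continuous.aestronglyMeasurable
    (𝓕 (𝓕 g) : 𝓢(V, ℂ)).continuous.aestronglyMeasurable (· * ·) 1 (.of_forall fun x ↦ by simp)

end SchwartzMap

def modulatedConvolution (ψ φ : 𝓢(V, ℂ)) (y ξ : V) : ℂ :=
  ∫ η, exp (I * (⟪y, η⟫ : ℝ)) * (𝓕 ψ : 𝓢(V, ℂ)) (ξ - η) * (𝓕 φ : 𝓢(V, ℂ)) η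

-- `𝓕` uses the phase `e^{-2πi⟪x, ξ⟫}`, so `e^{i⟪y, η⟫} 𝓕 φ η` transforms the translate by `y/2π`.
theorem modulatedConvolution_eq_convolution (ψ φ : 𝓢(V, ℂ)) (y : V) :
    modulatedConvolution ψ φ y =
      ⇑(𝓕 (compSubConstCLM ℂ (-(2 * Real.pi)⁻¹ • y) φ) : 𝓢(V, ℂ))
        ⋆[ContinuousLinearMap.mul ℂ ℂ] ⇑(𝓕 ψ : 𝓢(V, ℂ)) := by
  have hτ : ⇑(compSubConstCLM ℂ (-(2 * Real.pi)⁻¹ • y) φ) =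
      fun x ↦ φ (x + (2 * Real.pi)⁻¹ • y) := by
    ext x
    simp [neg_smul]
  ext ξ
  refine integral_congr_ae (.of_forall fun η ↦ ?_)
  dsimp only
  rw [fourier_coe (compSubConstCLM _ _ _), hτ, Real.fourier_comp_add_right, ← fourier_coe]
  simp only [ContinuousLinearMap.mul_apply', Circle.smul_def, Real.fourierChar_apply,
    real_inner_smul_left, smul_eq_mul]
  rw [mul_inv_cancel_left₀ Real.two_pi_pos.ne', mul_comm _ I]
  ring

theorem eLpNorm_modulatedConvolution_le {p q : ℝ≥0∞} [p.HolderTriple q 2] (ψ φ : 𝓢(V, ℂ))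
    (y : V) :
    eLpNorm (modulatedConvolution ψ φ y) 2 volume ≤ eLpNorm ψ p volume * eLpNorm φ q volume := by
  rw [modulatedConvolution_eq_convolution, mul_comm (eLpNorm ψ p volume)]
  refine (eLpNorm_fourier_convolution_le (p := q) (q := p) _ _).trans_eq ?_
  congr 1
  exact eLpNorm_comp_measurePreserving φ.continuous.aestronglyMeasurable
    (measurePreserving_sub_right volume _)

theorem stronglyMeasurable_modulatedConvolution (ψ φ : 𝓢(V, ℂ)) :
    StronglyMeasurable (uncurry (modulatedConvolution ψ φ)) :=
  StronglyMeasurable.integral_prod_right' (f := fun w : (V × V) × V ↦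
    exp (I * (⟪w.1.1, w.2⟫ : ℝ)) * (𝓕 ψ : 𝓢(V, ℂ)) (w.1.2 - w.2) * (𝓕 φ : 𝓢(V, ℂ)) w.2)
    (Continuous.stronglyMeasurable (by fun_prop))

end Fourier

theorem integral_multiplier2_mul_eq {K : E2 × E2 → ℂ} (hK : Integrable K) (ψ φ : 𝓢(E2, ℂ))
    (ξ : E2) :
    ∫ η, multiplier2 K ξ η * 𝓕 (ψ : E2 → ℂ) (ξ - η) * 𝓕 (φ : E2 → ℂ) η =
      ∫ z : E2 × E2, K z * exp (I * (⟪z.1, ξ⟫ : ℝ)) * modulatedConvolution ψ φ z.2 ξ := by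
  set g : E2 → ℂ := fun η ↦ (𝓕 ψ : 𝓢(E2, ℂ)) (ξ - η) * (𝓕 φ : 𝓢(E2, ℂ)) η
  set F : E2 → E2 × E2 → ℂ := fun η z ↦
    K z * exp (I * ((⟪z.1, ξ⟫ : ℝ) + (⟪z.2, η⟫ : ℝ) : ℂ)) * g η
  have hg : Integrable g := (𝓕 φ).integrable.bdd_mul (by fun_prop)
    (.of_forall fun η ↦ (𝓕 ψ).norm_le_seminorm ℝ (ξ - η))
  have hF : Integrable (uncurry F) (volume.prod volume) := by
    refine (hg.mul_prod hK).congr' ?_ (.of_forall fun w ↦ ?_)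
    · exact (hK.1.comp_snd.mul (by fun_prop)).mul (by fun_prop)
    · obtain ⟨η, z⟩ := w
      simp only [uncurry_apply_pair, F, norm_mul, ← ofReal_add, norm_exp_I_mul_ofReal, mul_one]
      ring
  calc ∫ η, multiplier2 K ξ η * 𝓕 (ψ : E2 → ℂ) (ξ - η) * 𝓕 (φ : E2 → ℂ) η
      = ∫ η, ∫ z, F η z := by
        refine integral_congr_ae (.of_forall fun η ↦ ?_)
        simp only [multiplier2, F, g, fourier_coe, ← mul_assoc, integral_mul_const]
    _ = ∫ z, ∫ η, F η z := integral_integral_swap hF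
    _ = _ := by
        refine integral_congr_ae (.of_forall fun z ↦ ?_)
        simp only [modulatedConvolution, F, g, ← integral_const_mul]
        refine integral_congr_ae (.of_forall fun η ↦ ?_)
        simp only [mul_add, exp_add]
        ring

theorem coifman_meyer_bilinear_general (p q : ℝ≥0∞)
    (hpq : 1 / p + 1 / q = 1 / 2) :
    ∃ C : ℝ, 0 < C ∧
      ∀ K : E2 × E2 → ℂ, Integrable K →
        ∀ ψ φ : SchwartzMap E2 ℂ,
          eLpNorm (fun ξ : E2 =>
              ∫ η : E2, multiplier2 K ξ η *
                FourierTransform.fourier (⇑ψ : E2 → ℂ) (ξ - η) *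
                FourierTransform.fourier (⇑φ : E2 → ℂ) η) 2 volume ≤
            ENNReal.ofReal C * ENNReal.ofReal (∫ pt : E2 × E2, ‖K pt‖) *
              eLpNorm (⇑ψ) p volume * eLpNorm (⇑φ) q volume := by
  have : p.HolderTriple q 2 := ⟨by simpa only [one_div] using hpq⟩
  refine ⟨1, one_pos, fun K hK ψ φ ↦ ?_⟩
  have hF : AEStronglyMeasurable (uncurry fun (z : E2 × E2) ξ ↦
      K z * exp (I * (⟪z.1, ξ⟫ : ℝ)) * modulatedConvolution ψ φ z.2 ξ) (volume.prod volume) :=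
    (hK.1.comp_fst.mul (by fun_prop)).mul
      ((stronglyMeasurable_modulatedConvolution ψ φ).comp_measurable
        (measurable_fst.snd.prodMk measurable_snd)).aestronglyMeasurable
  have hterm (z : E2 × E2) :
      eLpNorm (fun ξ ↦ K z * exp (I * (⟪z.1, ξ⟫ : ℝ)) * modulatedConvolution ψ φ z.2 ξ) 2 volume
        ≤ ‖K z‖ₑ * (eLpNorm ψ p volume * eLpNorm φ q volume) := by
    rw [eLpNorm_congr_norm_ae (g := K z • modulatedConvolution ψ φ z.2) (.of_forall fun ξ ↦ by
      simp [norm_exp_I_mul_ofReal]), eLpNorm_const_smul]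
    gcongr
    exact eLpNorm_modulatedConvolution_le ψ φ z.2
  simp_rw [integral_multiplier2_mul_eq hK]
  calc _ ≤ ∫⁻ z, eLpNorm (fun ξ ↦
          K z * exp (I * (⟪z.1, ξ⟫ : ℝ)) * modulatedConvolution ψ φ z.2 ξ) 2 volume :=
        eLpNorm_two_integral_le hF
    _ ≤ ∫⁻ z, ‖K z‖ₑ * (eLpNorm ψ p volume * eLpNorm φ q volume) := lintegral_mono hterm
    _ = _ := by
        rw [lintegral_mul_const'' _ hK.1.enorm, ofReal_integral_norm_eq_lintegral_enorm hK,
          ENNReal.ofReal_one, one_mul, mul_assoc]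

/-- Coifman–Meyer type bilinear estimate. -/
theorem coifman_meyer_bilinear (p q : ℝ≥0∞) (hp : 2 ≤ p) (hq : 2 ≤ q)
    (hpq : 1 / p + 1 / q = 1 / 2) :
    ∃ C : ℝ, 0 < C ∧
      ∀ K : E2 × E2 → ℂ, Integrable K →
        ∀ ψ φ : SchwartzMap E2 ℂ,
          eLpNorm (fun ξ : E2 =>
              ∫ η : E2, multiplier2 K ξ η *
                FourierTransform.fourier (⇑ψ : E2 → ℂ) (ξ - η) *
                FourierTransform.fourier (⇑φ : E2 → ℂ) η) 2 volume ≤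
            ENNReal.ofReal C * ENNReal.ofReal (∫ pt : E2 × E2, ‖K pt‖) *
              eLpNorm (⇑ψ) p volume * eLpNorm (⇑φ) q volume :=
  coifman_meyer_bilinear_general p q hpq
end
end
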